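/- Let F ∈ GL⁺(3, ℝ) with polar decomposition F = U_p H and diagonalization H = V D Vᵀ, D = diag(d₁,d₂,d₃), dᵢ > 0. Then for all μ > 0 and μ_c ≥ 0, the minimum over Q ∈ SO(3) and all real matrix logarithms X with exp X = Qᵀ F of μ‖sym X‖_F² + μ_c‖skew X‖_F² equals μ‖log H‖_F² = μ Σᵢ (log dᵢ)², attained at Q = U_p. -/

import Mathlib

/-!
For every real logarithm `X` of `Qᵀ F` the Gram matrix `(exp X)ᵀ exp X = Fᵀ F = H²` is the same,
with eigenvalues `exp (2 λᵢ)`, where `λᵢ` are the eigenvalues of the symmetric logarithm `L` of `H`.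
A Grönwall estimate for `s ↦ ‖exp (s • X) v‖²` puts every `λᵢ` between the smallest and the
largest eigenvalue of `sym X`, and `det (exp X) = exp (tr X)` gives both families the same sum.
In dimension three this says that the eigenvalues of `sym X` majorize the `λᵢ`, hence
`‖L‖² = ∑ λᵢ² ≤ ‖sym X‖²`, with equality for `Q = U_p`, `X = L`.
-/

open Matrix

noncomputable def frobSqR (X : Matrix (Fin 3) (Fin 3) ℝ) : ℝ :=
  ∑ i, ∑ j, |X i j| ^ 2

open NormedSpace

theorem sum_sq_le_sum_sq_of_monotone {x y : Fin 3 → ℝ} (hx : Monotone x) (hy : Monotone y)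
    (h0 : y 0 ≤ x 0) (h2 : x 2 ≤ y 2) (hsum : ∑ i, x i = ∑ i, y i) :
    ∑ i, x i ^ 2 ≤ ∑ i, y i ^ 2 := by
  have hx01 := hx (show (0 : Fin 3) ≤ 1 by decide)
  have hx12 := hx (show (1 : Fin 3) ≤ 2 by decide)
  have hy01 := hy (show (0 : Fin 3) ≤ 1 by decide)
  have hy12 := hy (show (1 : Fin 3) ≤ 2 by decide)
  simp only [Fin.sum_univ_three] at hsum ⊢
  have h1 : 0 ≤ (y 2 - y 1) - 2 * (y 2 - x 2) + (x 0 - y 0) := by linarith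
  have h2' : 0 ≤ (y 1 - y 0) - 2 * (x 0 - y 0) + (y 2 - x 2) := by linarith
  rw [show x 1 = y 0 + y 1 + y 2 - x 0 - x 2 by linarith]
  -- with `p = y 2 - x 2`, `q = x 0 - y 0` the gap is `2 (p h1 + q h2') + p² + q² + (p - q)²`
  nlinarith [mul_nonneg (sub_nonneg.2 h2) h1, mul_nonneg (sub_nonneg.2 h0) h2',
    sq_nonneg (y 2 - x 2 - x 0 + y 0), sq_nonneg (y 2 - x 2), sq_nonneg (x 0 - y 0)]

theorem sum_sq_le_sum_sq_of_forall_le {x y : Fin 3 → ℝ}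
    (hle : ∀ b, (∀ j, y j ≤ b) → ∀ i, x i ≤ b) (hge : ∀ a, (∀ j, a ≤ y j) → ∀ i, a ≤ x i)
    (hsum : ∑ i, x i = ∑ i, y i) : ∑ i, x i ^ 2 ≤ ∑ i, y i ^ 2 := by
  set σ := Tuple.sort x
  set τ := Tuple.sort y
  have hy := Tuple.monotone_sort y
  have hτ : ∀ j, y (τ 0) ≤ y j ∧ y j ≤ y (τ 2) := fun j => by
    obtain ⟨k, rfl⟩ := τ.surjective j
    exact ⟨hy (Fin.zero_le k), hy (Fin.le_last k)⟩
  rw [← Equiv.sum_comp σ x, ← Equiv.sum_comp τ y] at hsum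
  rw [← Equiv.sum_comp σ (fun i => x i ^ 2), ← Equiv.sum_comp τ (fun i => y i ^ 2)]
  exact sum_sq_le_sum_sq_of_monotone (Tuple.monotone_sort x) hy
    (hge _ (fun j => (hτ j).1) _) (hle _ (fun j => (hτ j).2) _) hsum

section SymmPart

variable {n : Type*}

theorem isSymm_symmPart (X : Matrix n n ℝ) : ((1 / 2 : ℝ) • (X + Xᵀ)).IsSymm := by
  simp [IsSymm, add_comm]

theorem symmPart_eq_self {L : Matrix n n ℝ} (hL : L.IsSymm) : (1 / 2 : ℝ) • (L + Lᵀ) = L := by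
  rw [hL.eq, ← two_smul ℝ L, smul_smul]
  norm_num

variable [Fintype n]

theorem trace_symmPart (X : Matrix n n ℝ) : ((1 / 2 : ℝ) • (X + Xᵀ)).trace = X.trace := by
  rw [trace_smul, trace_add, trace_transpose, smul_eq_mul]
  ring

theorem dotProduct_symmPart_mulVec (X : Matrix n n ℝ) (w : n → ℝ) :
    w ⬝ᵥ ((1 / 2 : ℝ) • (X + Xᵀ)) *ᵥ w = w ⬝ᵥ X *ᵥ w := by
  have hT : w ⬝ᵥ Xᵀ *ᵥ w = w ⬝ᵥ X *ᵥ w := by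
    rw [mulVec_transpose, dotProduct_comm, ← dotProduct_mulVec]
  rw [smul_mulVec, add_mulVec, dotProduct_smul, dotProduct_add, hT, smul_eq_mul]
  ring

end SymmPart

section OrthogonalDiagonalization

variable {n : Type*} [Fintype n] [DecidableEq n]

theorem Matrix.IsSymm.exists_orthogonal_diagonal {A : Matrix n n ℝ} (hA : A.IsSymm) :
    ∃ W ∈ orthogonalGroup n ℝ, ∃ e : n → ℝ, A = W * diagonal e * Wᵀ := by
  have hH : A.IsHermitian := isHermitian_iff_isSymm.2 hA
  refine ⟨hH.eigenvectorUnitary, hH.eigenvectorUnitary.2, hH.eigenvalues, ?_⟩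
  simpa [Unitary.conjStarAlgAut_apply, star_eq_conjTranspose] using hH.spectral_theorem

theorem isSymm_conj_diagonal (W : Matrix n n ℝ) (e : n → ℝ) : (W * diagonal e * Wᵀ).IsSymm := by
  simp [IsSymm, transpose_mul, Matrix.mul_assoc]

theorem dotProduct_conj_diagonal_mulVec (W : Matrix n n ℝ) (e w : n → ℝ) :
    w ⬝ᵥ (W * diagonal e * Wᵀ) *ᵥ w = ∑ i, e i * (Wᵀ *ᵥ w) i ^ 2 := by
  rw [← mulVec_mulVec, ← mulVec_mulVec, dotProduct_mulVec, ← mulVec_transpose]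
  simp [dotProduct, mulVec_diagonal, sq, mul_left_comm]

variable {W : Matrix n n ℝ}

theorem conj_diagonal_mul_conj_diagonal (hW : W ∈ orthogonalGroup n ℝ) (e f : n → ℝ) :
    W * diagonal e * Wᵀ * (W * diagonal f * Wᵀ) = W * diagonal (e * f) * Wᵀ := by
  simp only [Matrix.mul_assoc, ← Matrix.mul_assoc Wᵀ, (mem_orthogonalGroup_iff' n ℝ).1 hW,
    Matrix.one_mul]
  rw [← Matrix.mul_assoc (diagonal e), diagonal_mul_diagonal]
  rfl

theorem trace_conj_diagonal (hW : W ∈ orthogonalGroup n ℝ) (e : n → ℝ) :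
    (W * diagonal e * Wᵀ).trace = ∑ i, e i := by
  rw [trace_mul_cycle, (mem_orthogonalGroup_iff' n ℝ).1 hW, Matrix.one_mul, trace_diagonal]

theorem conj_diagonal_mulVec_mulVec_single (hW : W ∈ orthogonalGroup n ℝ) (e : n → ℝ) (i : n) :
    (W * diagonal e * Wᵀ) *ᵥ (W *ᵥ Pi.single i 1) = e i • (W *ᵥ Pi.single i 1) := by
  rw [mulVec_mulVec, Matrix.mul_assoc, Matrix.mul_assoc, (mem_orthogonalGroup_iff' n ℝ).1 hW,
    Matrix.mul_one, ← mulVec_mulVec, diagonal_mulVec_single, mul_one, ← mulVec_smul,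
    ← Pi.single_smul, smul_eq_mul, mul_one]

theorem mulVec_single_one_ne_zero (hW : W ∈ orthogonalGroup n ℝ) (i : n) :
    W *ᵥ Pi.single i (1 : ℝ) ≠ 0 := by
  intro h
  have := congrArg (Wᵀ *ᵥ ·) h
  rw [mulVec_mulVec, (mem_orthogonalGroup_iff' n ℝ).1 hW, one_mulVec, mulVec_zero] at this
  simpa using congrFun this i

theorem dotProduct_self_eq_of_mem_orthogonalGroup (hW : W ∈ orthogonalGroup n ℝ) (w : n → ℝ) :
    w ⬝ᵥ w = ∑ i, (Wᵀ *ᵥ w) i ^ 2 := by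
  simpa [(mem_orthogonalGroup_iff n ℝ).1 hW] using dotProduct_conj_diagonal_mulVec W 1 w

theorem dotProduct_conj_diagonal_mulVec_le (hW : W ∈ orthogonalGroup n ℝ) {e : n → ℝ} {b : ℝ}
    (he : ∀ i, e i ≤ b) (w : n → ℝ) : w ⬝ᵥ (W * diagonal e * Wᵀ) *ᵥ w ≤ b * (w ⬝ᵥ w) := by
  rw [dotProduct_conj_diagonal_mulVec, dotProduct_self_eq_of_mem_orthogonalGroup hW,
    Finset.mul_sum]
  gcongr with i
  exact he i

theorem le_dotProduct_conj_diagonal_mulVec (hW : W ∈ orthogonalGroup n ℝ) {e : n → ℝ} {a : ℝ}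
    (he : ∀ i, a ≤ e i) (w : n → ℝ) : a * (w ⬝ᵥ w) ≤ w ⬝ᵥ (W * diagonal e * Wᵀ) *ᵥ w := by
  rw [dotProduct_conj_diagonal_mulVec, dotProduct_self_eq_of_mem_orthogonalGroup hW,
    Finset.mul_sum]
  gcongr with i
  exact he i

theorem exp_conj_diagonal (hW : W ∈ orthogonalGroup n ℝ) (e : n → ℝ) :
    exp (W * diagonal e * Wᵀ) = W * diagonal (Real.exp ∘ e) * Wᵀ := by
  have hWinv : W⁻¹ = Wᵀ := inv_eq_right_inv ((mem_orthogonalGroup_iff n ℝ).1 hW)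
  rw [← hWinv, exp_conj W _ (Unitary.isUnit_coe (U := ⟨W, hW⟩)), exp_diagonal,
    Real.exp_eq_exp_ℝ, Pi.exp_def]
  rfl

end OrthogonalDiagonalization

section Exponential

attribute [local instance] Matrix.linftyOpNormedRing Matrix.linftyOpNormedAlgebra

variable {n : Type*} [Fintype n] [DecidableEq n]

theorem hasDerivAt_exp_smul_mulVec (X : Matrix n n ℝ) (v : n → ℝ) (t : ℝ) :
    HasDerivAt (fun s : ℝ => exp (s • X) *ᵥ v) (X *ᵥ (exp (t • X) *ᵥ v)) t := by
  let applyTo : Matrix n n ℝ →L[ℝ] n → ℝ := LinearMap.toContinuousLinearMap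
    { toFun := fun A => A *ᵥ v
      map_add' := fun A B => add_mulVec A B v
      map_smul' := fun c A => smul_mulVec c A v }
  rw [mulVec_mulVec]
  exact applyTo.hasFDerivAt.comp_hasDerivAt t (hasDerivAt_exp_smul_const' X t)

theorem hasDerivAt_exp_smul_apply (X : Matrix n n ℝ) (t : ℝ) (i j : n) :
    HasDerivAt (fun s : ℝ => exp (s • X) i j) ((X * exp (t • X)) i j) t := by
  have := hasDerivAt_pi.1 (hasDerivAt_exp_smul_mulVec X (Pi.single j 1) t) i
  simp only [mulVec_single_one, col_apply] at this
  exact this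

omit [DecidableEq n] in
theorem HasDerivAt.dotProduct_self {u : ℝ → n → ℝ} {u' : n → ℝ} {t : ℝ}
    (hu : HasDerivAt u u' t) : HasDerivAt (fun s => u s ⬝ᵥ u s) (2 * (u t ⬝ᵥ u')) t := by
  have hi := hasDerivAt_pi.1 hu
  have h : HasDerivAt (fun s => ∑ i, u s i * u s i) (∑ i, (u' i * u t i + u t i * u' i)) t :=
    HasDerivAt.fun_sum fun i _ => (hi i).fun_mul (hi i)
  refine h.congr_deriv ?_
  simp only [dotProduct, Finset.mul_sum]
  exact Finset.sum_congr rfl fun i _ => by ring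

theorem dotProduct_exp_mulVec_le {X : Matrix n n ℝ} {b : ℝ}
    (hX : ∀ w, w ⬝ᵥ X *ᵥ w ≤ b * (w ⬝ᵥ w)) (v : n → ℝ) :
    (exp X *ᵥ v) ⬝ᵥ (exp X *ᵥ v) ≤ Real.exp (2 * b) * (v ⬝ᵥ v) := by
  set f : ℝ → ℝ := fun s => (exp (s • X) *ᵥ v) ⬝ᵥ (exp (s • X) *ᵥ v)
  have hf : ∀ t, HasDerivAt f (2 * ((exp (t • X) *ᵥ v) ⬝ᵥ X *ᵥ (exp (t • X) *ᵥ v))) t :=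
    fun t => (hasDerivAt_exp_smul_mulVec X v t).dotProduct_self
  have := le_gronwallBound_of_liminf_deriv_right_le (K := 2 * b) (b := 1) (ε := 0)
    (fun t _ => (hf t).continuousAt.continuousWithinAt)
    (fun t _ _ hr => (hf t).hasDerivWithinAt.liminf_right_slope_le hr) le_rfl
    (fun t _ => by linarith [hX (exp (t • X) *ᵥ v)]) 1 ⟨zero_le_one, le_rfl⟩
  simpa [f, gronwallBound_ε0, mul_comm] using this

theorem le_dotProduct_exp_mulVec {X : Matrix n n ℝ} {a : ℝ}
    (hX : ∀ w, a * (w ⬝ᵥ w) ≤ w ⬝ᵥ X *ᵥ w) (v : n → ℝ) :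
    Real.exp (2 * a) * (v ⬝ᵥ v) ≤ (exp X *ᵥ v) ⬝ᵥ (exp X *ᵥ v) := by
  have hinv : exp (-X) *ᵥ (exp X *ᵥ v) = v := by
    rw [mulVec_mulVec, Matrix.exp_neg,
      nonsing_inv_mul _ ((isUnit_iff_isUnit_det _).1 (Matrix.isUnit_exp X)), one_mulVec]
  have := dotProduct_exp_mulVec_le (X := -X) (b := -a)
    (fun w => by simpa [neg_mulVec] using neg_le_neg (hX w)) (exp X *ᵥ v)
  rw [hinv] at this
  calc Real.exp (2 * a) * (v ⬝ᵥ v)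
      ≤ Real.exp (2 * a) * (Real.exp (2 * -a) * ((exp X *ᵥ v) ⬝ᵥ (exp X *ᵥ v))) := by gcongr
    _ = (exp X *ᵥ v) ⬝ᵥ (exp X *ᵥ v) := by
      rw [← mul_assoc, ← Real.exp_add]
      simp

end Exponential

section GramEigenvalues

variable {n : Type*} [Fintype n] [DecidableEq n] {X : Matrix n n ℝ} {v : n → ℝ} {c : ℝ}

omit [DecidableEq n] in
theorem dotProduct_mulVec_self_of_gram_mulVec_eq {A : Matrix n n ℝ} {r : ℝ}
    (h : (Aᵀ * A) *ᵥ v = r • v) : (A *ᵥ v) ⬝ᵥ (A *ᵥ v) = r * (v ⬝ᵥ v) := by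
  rw [dotProduct_mulVec, ← mulVec_transpose, dotProduct_comm, mulVec_mulVec, h, dotProduct_smul,
    smul_eq_mul]

theorem le_of_gram_exp_mulVec_eq {b : ℝ} (hv : v ≠ 0) (hX : ∀ w, w ⬝ᵥ X *ᵥ w ≤ b * (w ⬝ᵥ w))
    (hc : ((exp X)ᵀ * exp X) *ᵥ v = Real.exp (2 * c) • v) : c ≤ b := by
  have hv' : 0 < v ⬝ᵥ v := by simpa using dotProduct_self_star_pos_iff.2 hv
  have := dotProduct_exp_mulVec_le hX v
  rw [dotProduct_mulVec_self_of_gram_mulVec_eq hc] at this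
  linarith [Real.exp_le_exp.1 (le_of_mul_le_mul_right this hv')]

theorem ge_of_gram_exp_mulVec_eq {a : ℝ} (hv : v ≠ 0) (hX : ∀ w, a * (w ⬝ᵥ w) ≤ w ⬝ᵥ X *ᵥ w)
    (hc : ((exp X)ᵀ * exp X) *ᵥ v = Real.exp (2 * c) • v) : a ≤ c := by
  have hv' : 0 < v ⬝ᵥ v := by simpa using dotProduct_self_star_pos_iff.2 hv
  have := le_dotProduct_exp_mulVec hX v
  rw [dotProduct_mulVec_self_of_gram_mulVec_eq hc] at this
  linarith [Real.exp_le_exp.1 (le_of_mul_le_mul_right this hv')]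

end GramEigenvalues

theorem hasDerivAt_det_exp_smul (X : Matrix (Fin 3) (Fin 3) ℝ) (t : ℝ) :
    HasDerivAt (fun s : ℝ => (exp (s • X)).det) (X.trace * (exp (t • X)).det) t := by
  have e := hasDerivAt_exp_smul_apply X t
  simp only [det_fin_three]
  refine ((((((((e 0 0).mul (e 1 1)).mul (e 2 2)).sub (((e 0 0).mul (e 1 2)).mul (e 2 1))).sub
    (((e 0 1).mul (e 1 0)).mul (e 2 2))).add (((e 0 1).mul (e 1 2)).mul (e 2 0))).add
    (((e 0 2).mul (e 1 0)).mul (e 2 1))).sub (((e 0 2).mul (e 1 1)).mul (e 2 0))).congr_deriv ?_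
  simp only [mul_apply, trace_fin_three, Fin.sum_univ_three, Pi.mul_apply]
  ring

theorem det_exp_fin_three (X : Matrix (Fin 3) (Fin 3) ℝ) : (exp X).det = Real.exp X.trace := by
  set g : ℝ → ℝ := fun s => (exp (s • X)).det * Real.exp (-(s * X.trace))
  have hg : ∀ t, HasDerivAt g 0 t := fun t => by
    refine ((hasDerivAt_det_exp_smul X t).mul
      ((hasDerivAt_mul_const X.trace).neg.exp)).congr_deriv ?_
    ring
  have := is_const_of_deriv_eq_zero (fun t => (hg t).differentiableAt) (fun t => (hg t).deriv) 1 0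
  simp only [g, one_smul, one_mul, zero_smul, exp_zero, det_one, zero_mul, Real.exp_zero,
    Real.exp_neg, inv_one] at this
  rwa [mul_inv_eq_one₀ (Real.exp_pos _).ne'] at this

theorem trace_eq_of_gram_exp_eq {X L : Matrix (Fin 3) (Fin 3) ℝ}
    (h : (exp X)ᵀ * exp X = exp L * exp L) : X.trace = L.trace := by
  have := congrArg det h
  rw [det_mul, det_mul, det_transpose, det_exp_fin_three, det_exp_fin_three, ← Real.exp_add,
    ← Real.exp_add] at this
  linarith [Real.exp_injective this]

theorem frobSqR_nonneg (A : Matrix (Fin 3) (Fin 3) ℝ) : 0 ≤ frobSqR A := by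
  unfold frobSqR
  positivity

theorem frobSqR_eq_trace (A : Matrix (Fin 3) (Fin 3) ℝ) : frobSqR A = (A * Aᵀ).trace := by
  simp [frobSqR, trace, mul_apply, sq]

theorem frobSqR_conj_diagonal {W : Matrix (Fin 3) (Fin 3) ℝ} (hW : W ∈ orthogonalGroup (Fin 3) ℝ)
    (e : Fin 3 → ℝ) : frobSqR (W * diagonal e * Wᵀ) = ∑ i, e i ^ 2 := by
  rw [frobSqR_eq_trace, (isSymm_conj_diagonal W e).eq, conj_diagonal_mul_conj_diagonal hW,
    trace_conj_diagonal hW]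
  simp [sq]

theorem frobSqR_le_frobSqR_symmPart_of_gram_exp_eq {X L : Matrix (Fin 3) (Fin 3) ℝ}
    (hL : L.IsSymm) (h : (exp X)ᵀ * exp X = exp L * exp L) :
    frobSqR L ≤ frobSqR ((1 / 2 : ℝ) • (X + Xᵀ)) := by
  have htrace := trace_eq_of_gram_exp_eq h
  obtain ⟨W, hW, e, rfl⟩ := hL.exists_orthogonal_diagonal
  obtain ⟨U, hU, μ, hS⟩ := (isSymm_symmPart X).exists_orthogonal_diagonal
  have hquad : ∀ w, w ⬝ᵥ X *ᵥ w = w ⬝ᵥ (U * diagonal μ * Uᵀ) *ᵥ w := fun w => by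
    rw [← hS, dotProduct_symmPart_mulVec]
  have heig : ∀ i, ((exp X)ᵀ * exp X) *ᵥ (W *ᵥ Pi.single i 1) =
      Real.exp (2 * e i) • (W *ᵥ Pi.single i 1) := fun i => by
    rw [h, exp_conj_diagonal hW, conj_diagonal_mul_conj_diagonal hW, conj_diagonal_mulVec_mulVec_single hW]
    simp [← Real.exp_add, two_mul]
  rw [hS, frobSqR_conj_diagonal hW, frobSqR_conj_diagonal hU]
  refine sum_sq_le_sum_sq_of_forall_le (fun b hb i => ?_) (fun a ha i => ?_) ?_
  · exact le_of_gram_exp_mulVec_eq (mulVec_single_one_ne_zero hW i)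
      (fun w => (hquad w).trans_le (dotProduct_conj_diagonal_mulVec_le hU hb w)) (heig i)
  · exact ge_of_gram_exp_mulVec_eq (mulVec_single_one_ne_zero hW i)
      (fun w => (le_dotProduct_conj_diagonal_mulVec hU ha w).trans_eq (hquad w).symm) (heig i)
  · rw [← trace_conj_diagonal hW, ← htrace, ← trace_symmPart, hS, trace_conj_diagonal hU]

theorem frobSqR_eq_of_exp_eq {L L' : Matrix (Fin 3) (Fin 3) ℝ} (hL : L.IsSymm) (hL' : L'.IsSymm)
    (h : exp L = exp L') : frobSqR L = frobSqR L' := by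
  refine le_antisymm ?_ ?_
  · have := frobSqR_le_frobSqR_symmPart_of_gram_exp_eq (X := L') hL
      (by rw [← exp_transpose, hL'.eq, h])
    rwa [symmPart_eq_self hL'] at this
  · have := frobSqR_le_frobSqR_symmPart_of_gram_exp_eq (X := L) hL'
      (by rw [← exp_transpose, hL.eq, h])
    rwa [symmPart_eq_self hL] at this

theorem min_weighted_frobSq_log_SO3_general (F Up H L V : Matrix (Fin 3) (Fin 3) ℝ)
    (hUp : Up ∈ Matrix.orthogonalGroup (Fin 3) ℝ) (hUpdet : Up.det = 1)
    (hpolar : F = Up * H)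
    (hL : L.IsSymm) (hexpL : NormedSpace.exp L = H)
    (d : Fin 3 → ℝ) (hdpos : ∀ i, 0 < d i)
    (hV : V ∈ Matrix.orthogonalGroup (Fin 3) ℝ)
    (hdiag : H = V * Matrix.diagonal d * Vᵀ)
    (μ μc : ℝ) (hμ : 0 < μ) (hμc : 0 ≤ μc) :
    IsLeast {r : ℝ | ∃ Q ∈ Matrix.orthogonalGroup (Fin 3) ℝ, Q.det = 1 ∧
        ∃ X : Matrix (Fin 3) (Fin 3) ℝ, NormedSpace.exp X = Qᵀ * F ∧
          r = μ * frobSqR ((1 / 2 : ℝ) • (X + Xᵀ)) + μc * frobSqR ((1 / 2 : ℝ) • (X - Xᵀ))}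
      (μ * frobSqR L) ∧
    μ * frobSqR L = μ * ∑ i, (Real.log (d i)) ^ 2 := by
  have hexpLog : exp (V * diagonal (Real.log ∘ d) * Vᵀ) = H := by
    rw [exp_conj_diagonal hV, hdiag,
      show Real.exp ∘ (Real.log ∘ d) = d from funext fun i => Real.exp_log (hdpos i)]
  have hfrobL : frobSqR L = ∑ i, Real.log (d i) ^ 2 := by
    rw [frobSqR_eq_of_exp_eq hL (isSymm_conj_diagonal V _) (hexpL.trans hexpLog.symm),
      frobSqR_conj_diagonal hV]
    rfl
  have hUpUp : Upᵀ * Up = 1 := (mem_orthogonalGroup_iff' _ _).1 hUp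
  refine ⟨⟨⟨Up, hUp, hUpdet, L, ?_, ?_⟩, ?_⟩, by rw [hfrobL]⟩
  · rw [hexpL, hpolar, ← Matrix.mul_assoc, hUpUp, Matrix.one_mul]
  · rw [symmPart_eq_self hL, hL.eq, sub_self, smul_zero]
    simp [frobSqR]
  · rintro r ⟨Q, hQ, -, X, hX, rfl⟩
    have hgram : (exp X)ᵀ * exp X = exp L * exp L := by
      rw [hX, hpolar, ← hexpL, transpose_mul, transpose_transpose, transpose_mul,
        ← exp_transpose, hL.eq]
      simp only [Matrix.mul_assoc]
      rw [← Matrix.mul_assoc Q, (mem_orthogonalGroup_iff _ _).1 hQ, Matrix.one_mul,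
        ← Matrix.mul_assoc Upᵀ, hUpUp, Matrix.one_mul]
    have := frobSqR_le_frobSqR_symmPart_of_gram_exp_eq hL hgram
    nlinarith [frobSqR_nonneg ((1 / 2 : ℝ) • (X - Xᵀ))]

/-- For `F ∈ GL⁺(3,ℝ)` with polar decomposition `F = U_p H`, `H = V D Vᵀ`,
`D = diag d`, and all `μ > 0`, `μ_c ≥ 0`, the minimum over `Q ∈ SO(3)` and all real
logarithms `X` of `Qᵀ F` of `μ‖sym X‖_F² + μ_c‖skew X‖_F²` equals
`μ‖log H‖_F² = μ Σᵢ (log dᵢ)²`, attained at `Q = U_p`. -/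
theorem min_weighted_frobSq_log_SO3 (F Up H L V : Matrix (Fin 3) (Fin 3) ℝ)
    (hF : 0 < F.det)
    (hUp : Up ∈ Matrix.orthogonalGroup (Fin 3) ℝ) (hUpdet : Up.det = 1)
    (hH : H.PosDef) (hpolar : F = Up * H)
    (hL : L.IsSymm) (hexpL : NormedSpace.exp L = H)
    (d : Fin 3 → ℝ) (hdpos : ∀ i, 0 < d i)
    (hV : V ∈ Matrix.orthogonalGroup (Fin 3) ℝ)
    (hdiag : H = V * Matrix.diagonal d * Vᵀ)
    (μ μc : ℝ) (hμ : 0 < μ) (hμc : 0 ≤ μc) :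
    IsLeast {r : ℝ | ∃ Q ∈ Matrix.orthogonalGroup (Fin 3) ℝ, Q.det = 1 ∧
        ∃ X : Matrix (Fin 3) (Fin 3) ℝ, NormedSpace.exp X = Qᵀ * F ∧
          r = μ * frobSqR ((1 / 2 : ℝ) • (X + Xᵀ)) + μc * frobSqR ((1 / 2 : ℝ) • (X - Xᵀ))}
      (μ * frobSqR L) ∧
    μ * frobSqR L = μ * ∑ i, (Real.log (d i)) ^ 2 :=
  min_weighted_frobSq_log_SO3_general F Up H L V hUp hUpdet hpolar hL hexpL d hdpos hV hdiag μ μc hμ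
    hμc
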